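/- For a linear fractional function f(x) = (p·x + α)/(q·x + β) with q·x + β > 0 on a convex set X, if x* ∈ X and for every direction d with x* + td ∈ X for small t > 0 one has (q·x* + β)(p·d) - (p·x* + α)(q·d) ≤ 0, then x* is a global maximizer of f over X. -/

import Mathlib

/-! The reduced gradient in the direction `x - x*` is exactly the numerator of `f x - f x*`
once both denominators are cleared:
`(Q x + β)(Q x* + β) (f x - f x*) = (Q x* + β) P (x - x*) - (P x* + α) Q (x - x*)`.
Since every `x - x*` with `x ∈ X` is a feasible direction, nonpositivity of the reduced gradient
gives `f x ≤ f x*` directly: no smallness of `t` or limit argument is involved. -/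

open Matrix

section LinearFractional

variable {E : Type*} [AddCommGroup E] [Module ℝ E]

def IsFeasibleDirection (X : Set E) (x d : E) : Prop :=
  ∃ ε > 0, ∀ t : ℝ, 0 < t → t ≤ ε → x + t • d ∈ X

theorem StarConvex.isFeasibleDirection_sub {X : Set E} {x y : E} (hX : StarConvex ℝ x X)
    (hy : y ∈ X) : IsFeasibleDirection X x (y - x) :=
  ⟨1, one_pos, fun _ ht ht₁ => hX.add_smul_sub_mem hy ht.le ht₁⟩

theorem div_le_div_of_reducedGradient_nonpos {a b a₀ b₀ : ℝ} (hb : 0 < b) (hb₀ : 0 < b₀)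
    (h : b₀ * (a - a₀) - a₀ * (b - b₀) ≤ 0) : a / b ≤ a₀ / b₀ := by
  rw [div_le_div_iff₀ hb hb₀]
  linarith

theorem isMaxOn_linearFractional_of_reducedGradient_nonpos {X : Set E} {P Q : E →ₗ[ℝ] ℝ}
    {α β : ℝ} {x₀ : E} (hX : StarConvex ℝ x₀ X) (hden : ∀ x ∈ X, 0 < Q x + β) (hx₀ : x₀ ∈ X)
    (hgrad : ∀ d, IsFeasibleDirection X x₀ d → (Q x₀ + β) * P d - (P x₀ + α) * Q d ≤ 0) :
    IsMaxOn (fun x => (P x + α) / (Q x + β)) X x₀ := by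
  intro x hx
  have h := hgrad (x - x₀) (hX.isFeasibleDirection_sub hx)
  rw [map_sub, map_sub] at h
  exact div_le_div_of_reducedGradient_nonpos (hden x hx) (hden x₀ hx₀) (by linarith)

end LinearFractional

/-- If at `x* ∈ X` (X convex, positive denominator) the reduced
gradient of the linear fractional function `f` is nonpositive in every feasible
direction, then `x*` is a global maximizer of `f` over `X`. -/
theorem reduced_gradient_nonpos_implies_max
    (n : ℕ) (p q : Fin n → ℝ) (α β : ℝ)
    (X : Set (Fin n → ℝ)) (hconv : Convex ℝ X)
    (hden : ∀ x ∈ X, 0 < (∑ j, q j * x j) + β)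
    (f : (Fin n → ℝ) → ℝ)
    (hf : ∀ x, f x = ((∑ j, p j * x j) + α) / ((∑ j, q j * x j) + β))
    (xstar : Fin n → ℝ) (hxs : xstar ∈ X)
    (hgrad : ∀ dvec : Fin n → ℝ,
      (∃ ε > 0, ∀ t : ℝ, 0 < t → t ≤ ε → xstar + t • dvec ∈ X) →
      ((∑ j, q j * xstar j) + β) * (∑ j, p j * dvec j)
        - ((∑ j, p j * xstar j) + α) * (∑ j, q j * dvec j) ≤ 0) :
    ∀ x ∈ X, f x ≤ f xstar := by
  intro x hx
  rw [hf, hf]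
  exact isMaxOn_linearFractional_of_reducedGradient_nonpos (P := dotProductBilin ℝ ℝ p)
    (Q := dotProductBilin ℝ ℝ q) (hconv.starConvex hxs) hden hxs hgrad hx
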